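/- arXiv:0912.3210 — 6 statements merged into one kernel-verified Lean document; each statement's English description precedes it below -/
import Mathlib

section
/- Let (ρ,v,q) ∈ ℝ×ℝ²×ℝ² with ρ ≠ 0, v ≠ 0 and v₁² + v₂² + ρv₂ = 0 (so that U(ρ,v,q) is a singular matrix, i.e. lies in the wave cone). Then for every twice continuously differentiable S : ℝ → ℝ there exist ξ ∈ ℝ³ \ {0} and real constants a, b such that, setting ψ(y) = a·S(⟨y,ξ⟩) and φ(y) = b·S'(⟨y,ξ⟩) for y = (x₁,x₂,t) ∈ ℝ³, one has D(φ,ψ)(y) = S''(⟨y,ξ⟩)·U(ρ,v,q) for all y ∈ ℝ³. In other words, every wave-cone direction with ρ ≠ 0 and v ≠ 0 is realized by a plane-wave potential. -/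
noncomputable section

/-- A space-time point `(x₁, x₂, t) ∈ ℝ² × ℝ`. -/
abbrev Pt : Type := ℝ × ℝ × ℝ

/-- Partial derivative in the first space variable `x₁`. -/
def pd1 (f : Pt → ℝ) (y : Pt) : ℝ := fderiv ℝ f y (1, 0, 0)

/-- Partial derivative in the second space variable `x₂`. -/
def pd2 (f : Pt → ℝ) (y : Pt) : ℝ := fderiv ℝ f y (0, 1, 0)

/-- Partial derivative in the time variable `t`. -/
def pdt (f : Pt → ℝ) (y : Pt) : ℝ := fderiv ℝ f y (0, 0, 1)

/-- The `3 × 3` matrix `U(ρ, v, q)` associated to a state `(ρ, v, q) ∈ ℝ × ℝ² × ℝ²`,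
with rows `(-v₂ - ρ, v₁, 0)`, `(v₁, v₂, 0)`, `(q₁, q₂, ρ)`. -/
def Umat (ρ : ℝ) (v q : ℝ × ℝ) : Matrix (Fin 3) (Fin 3) ℝ :=
  !![-v.2 - ρ, v.1, 0;
     v.1, v.2, 0;
     q.1, q.2, ρ]

/-- The potential `D(φ, ψ)`: the matrix field with rows `(-∂₂∂₂ψ, ∂₁∂₂ψ, 0)`,
`(∂₁∂₂ψ, -∂₁∂₁ψ, 0)`, `(-∂ₜ∂₁ψ - ∂₂φ, -∂ₜ∂₂ψ + ∂₁φ, Δψ)`, where `Δψ = ∂₁∂₁ψ + ∂₂∂₂ψ`. -/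
def Dmat (φ ψ : Pt → ℝ) (y : Pt) : Matrix (Fin 3) (Fin 3) ℝ :=
  !![-pd2 (pd2 ψ) y, pd1 (pd2 ψ) y, 0;
     pd1 (pd2 ψ) y, -pd1 (pd1 ψ) y, 0;
     -pdt (pd1 ψ) y - pd2 φ y, -pdt (pd2 ψ) y + pd1 φ y, pd1 (pd1 ψ) y + pd2 (pd2 ψ) y]

/-- The Euclidean inner product `⟨y, ξ⟩` on `ℝ³ = ℝ × ℝ × ℝ`. -/
def dot3 (y ξ : Pt) : ℝ := y.1 * ξ.1 + y.2.1 * ξ.2.1 + y.2.2 * ξ.2.2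

def dot3CLM (ξ : Pt) : Pt →L[ℝ] ℝ :=
  ξ.1 • ContinuousLinearMap.fst ℝ ℝ (ℝ × ℝ)
  + ξ.2.1 • (ContinuousLinearMap.fst ℝ ℝ ℝ).comp (ContinuousLinearMap.snd ℝ ℝ (ℝ × ℝ))
  + ξ.2.2 • (ContinuousLinearMap.snd ℝ ℝ ℝ).comp (ContinuousLinearMap.snd ℝ ℝ (ℝ × ℝ))

@[simp]
lemma dot3CLM_apply (ξ z : Pt) : dot3CLM ξ z = dot3 z ξ := by
  simp only [dot3CLM, dot3, add_apply, smul_apply,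
    ContinuousLinearMap.comp_apply, ContinuousLinearMap.coe_fst', ContinuousLinearMap.coe_snd',
    smul_eq_mul]
  ring

lemma fderiv_const_mul_comp_clm_apply {E : Type*} [NormedAddCommGroup E] [NormedSpace ℝ E]
    {g : ℝ → ℝ} (hg : Differentiable ℝ g) (c : ℝ) (L : E →L[ℝ] ℝ) (e : E) :
    (fderiv ℝ (fun z => c * g (L z)) · e) = fun y => c * L e * deriv g (L y) := by
  funext y
  have hd : HasFDerivAt (fun z => c * g (L z)) (c • deriv g (L y) • L) y :=
    (((hg (L y)).hasDerivAt).comp_hasFDerivAt y L.hasFDerivAt).const_mul c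
  rw [hd.fderiv]
  simp only [smul_apply, smul_eq_mul]
  ring

lemma fderiv_planeWave_apply {g : ℝ → ℝ} (hg : Differentiable ℝ g) (c : ℝ) (ξ e : Pt) :
    (fderiv ℝ (fun z => c * g (dot3 z ξ)) · e) = fun y => c * dot3 e ξ * deriv g (dot3 y ξ) := by
  simpa only [dot3CLM_apply] using fderiv_const_mul_comp_clm_apply hg c (dot3CLM ξ) e

section PlaneWave

variable {g : ℝ → ℝ} (hg : Differentiable ℝ g) (c : ℝ) (ξ : Pt)
include hg

lemma pd1_planeWave :
    pd1 (fun z => c * g (dot3 z ξ)) = fun y => c * ξ.1 * deriv g (dot3 y ξ) :=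
  (fderiv_planeWave_apply hg c ξ (1, 0, 0)).trans (by simp [dot3])

lemma pd2_planeWave :
    pd2 (fun z => c * g (dot3 z ξ)) = fun y => c * ξ.2.1 * deriv g (dot3 y ξ) :=
  (fderiv_planeWave_apply hg c ξ (0, 1, 0)).trans (by simp [dot3])

lemma pdt_planeWave :
    pdt (fun z => c * g (dot3 z ξ)) = fun y => c * ξ.2.2 * deriv g (dot3 y ξ) :=
  (fderiv_planeWave_apply hg c ξ (0, 0, 1)).trans (by simp [dot3])

end PlaneWave

/-- The symbol of `D` on the plane wave `ψ = a S(⟨·, ξ⟩)`, `φ = b S'(⟨·, ξ⟩)`. -/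
def Dsymbol (a b : ℝ) (ξ : Pt) : Matrix (Fin 3) (Fin 3) ℝ :=
  !![-a * ξ.2.1 ^ 2, a * ξ.1 * ξ.2.1, 0;
     a * ξ.1 * ξ.2.1, -a * ξ.1 ^ 2, 0;
     -a * ξ.1 * ξ.2.2 - b * ξ.2.1, -a * ξ.2.1 * ξ.2.2 + b * ξ.1, a * (ξ.1 ^ 2 + ξ.2.1 ^ 2)]

lemma Dmat_planeWave {S : ℝ → ℝ} (hS : ContDiff ℝ 2 S) (a b : ℝ) (ξ y : Pt) :
    Dmat (fun z => b * deriv S (dot3 z ξ)) (fun z => a * S (dot3 z ξ)) y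
      = deriv (deriv S) (dot3 y ξ) • Dsymbol a b ξ := by
  have hS₁ : Differentiable ℝ S := hS.differentiable (by norm_num)
  have hS₂ : Differentiable ℝ (deriv S) := hS.differentiable_deriv_two
  simp only [Dmat, pd1_planeWave hS₁, pd2_planeWave hS₁, pd1_planeWave hS₂, pd2_planeWave hS₂,
    pdt_planeWave hS₂]
  ext i j
  fin_cases i <;> fin_cases j <;> simp [Dsymbol] <;> ring

lemma exists_sq_eq_sq_eq_mul_eq {x y z : ℝ} (hx : 0 ≤ x) (hy : 0 ≤ y) (h : x * y = z ^ 2) :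
    ∃ s t : ℝ, s ^ 2 = x ∧ t ^ 2 = y ∧ s * t = z := by
  have hst : √x * √y = |z| := by rw [← Real.sqrt_mul hx, h, Real.sqrt_sq_eq_abs]
  rcases le_total 0 z with hz | hz
  · exact ⟨√x, √y, Real.sq_sqrt hx, Real.sq_sqrt hy, by rw [hst, abs_of_nonneg hz]⟩
  · exact ⟨√x, -√y, Real.sq_sqrt hx, by rw [neg_sq, Real.sq_sqrt hy],
      by rw [mul_neg, hst, abs_of_nonpos hz, neg_neg]⟩

/-- The cone condition says that the symmetric matrix `!![-v₂, v₁; v₁, v₂ + ρ] / ρ`, of trace `1`,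
is singular, so it is `ξ ξᵀ` for a unit vector `ξ`. -/
lemma exists_spatial_frequency {ρ : ℝ} {v : ℝ × ℝ} (hρ : ρ ≠ 0)
    (hcone : v.1 ^ 2 + v.2 ^ 2 + ρ * v.2 = 0) :
    ∃ ξ₁ ξ₂ : ℝ, ρ * ξ₁ ^ 2 = -v.2 ∧ ρ * ξ₂ ^ 2 = v.2 + ρ ∧ ρ * (ξ₁ * ξ₂) = v.1 := by
  have hprod : -v.2 / ρ * ((v.2 + ρ) / ρ) = (v.1 / ρ) ^ 2 := by
    field_simp
    linear_combination -hcone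
  have hsum : -v.2 / ρ + (v.2 + ρ) / ρ = 1 := by field_simp; ring
  have hx : 0 ≤ -v.2 / ρ := by nlinarith [sq_nonneg (v.1 / ρ)]
  have hy : 0 ≤ (v.2 + ρ) / ρ := by nlinarith [sq_nonneg (v.1 / ρ)]
  obtain ⟨ξ₁, ξ₂, h₁, h₂, h₁₂⟩ := exists_sq_eq_sq_eq_mul_eq hx hy hprod
  exact ⟨ξ₁, ξ₂, by rw [h₁]; field_simp, by rw [h₂]; field_simp, by rw [h₁₂]; field_simp⟩

/-- Since `(ξ₁, ξ₂)` is a unit vector, the last row is solved by projecting `q` onto `(ξ₁, ξ₂)`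
(giving `ξₜ`) and onto its rotation `(-ξ₂, ξ₁)` (giving `b`). -/
lemma Dsymbol_eq_Umat {ρ ξ₁ ξ₂ : ℝ} {v : ℝ × ℝ} (q : ℝ × ℝ) (hρ : ρ ≠ 0)
    (h₁ : ρ * ξ₁ ^ 2 = -v.2) (h₂ : ρ * ξ₂ ^ 2 = v.2 + ρ) (h₁₂ : ρ * (ξ₁ * ξ₂) = v.1) :
    Dsymbol ρ (q.2 * ξ₁ - q.1 * ξ₂) (ξ₁, ξ₂, -(q.1 * ξ₁ + q.2 * ξ₂) / ρ) = Umat ρ v q := by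
  have hunit : ξ₁ ^ 2 + ξ₂ ^ 2 = 1 :=
    mul_left_cancel₀ hρ (by linear_combination h₁ + h₂)
  have e₀₀ : -ρ * ξ₂ ^ 2 = -v.2 - ρ := by linear_combination -h₂
  have e₀₁ : ρ * ξ₁ * ξ₂ = v.1 := by linear_combination h₁₂
  have e₁₁ : -ρ * ξ₁ ^ 2 = v.2 := by linear_combination -h₁
  have e₂₀ : -ρ * ξ₁ * (-(q.1 * ξ₁ + q.2 * ξ₂) / ρ) - (q.2 * ξ₁ - q.1 * ξ₂) * ξ₂ = q.1 := by
    field_simp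
    linear_combination q.1 * hunit
  have e₂₁ : -ρ * ξ₂ * (-(q.1 * ξ₁ + q.2 * ξ₂) / ρ) + (q.2 * ξ₁ - q.1 * ξ₂) * ξ₁ = q.2 := by
    field_simp
    linear_combination q.2 * hunit
  dsimp only [Dsymbol]
  rw [e₀₀, e₀₁, e₁₁, e₂₀, e₂₁, hunit, mul_one]
  rfl

theorem wave_cone_direction_has_potential_general (ρ : ℝ) (v q : ℝ × ℝ)
    (hρ : ρ ≠ 0) (hcone : v.1 ^ 2 + v.2 ^ 2 + ρ * v.2 = 0)
    (S : ℝ → ℝ) (hS : ContDiff ℝ 2 S) :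
    ∃ ξ : Pt, ξ ≠ 0 ∧ ∃ a b : ℝ,
      ∀ y : Pt,
        Dmat (fun z => b * deriv S (dot3 z ξ)) (fun z => a * S (dot3 z ξ)) y
          = deriv (deriv S) (dot3 y ξ) • Umat ρ v q := by
  obtain ⟨ξ₁, ξ₂, h₁, h₂, h₁₂⟩ := exists_spatial_frequency hρ hcone
  refine ⟨(ξ₁, ξ₂, -(q.1 * ξ₁ + q.2 * ξ₂) / ρ), ?_, ρ, q.2 * ξ₁ - q.1 * ξ₂, fun y => ?_⟩
  · rw [Ne, Prod.mk_eq_zero, Prod.mk_eq_zero]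
    rintro ⟨rfl, rfl, -⟩
    exact hρ (by linear_combination -h₁ - h₂)
  · rw [Dmat_planeWave hS, Dsymbol_eq_Umat q hρ h₁ h₂ h₁₂]

/-- **Plane waves with potentials.** Every wave-cone direction `U(ρ, v, q)` with `ρ ≠ 0`
and `v ≠ 0` is realized by a plane-wave potential: for any `C²` profile `S` there are
`ξ ≠ 0` and constants `a, b` such that with `ψ = a S(⟨·, ξ⟩)` and `φ = b S'(⟨·, ξ⟩)` one
has `D(φ, ψ)(y) = S''(⟨y, ξ⟩) • U(ρ, v, q)` for all `y`. -/
theorem wave_cone_direction_has_potential (ρ : ℝ) (v q : ℝ × ℝ)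
    (hρ : ρ ≠ 0) (hv : v ≠ 0) (hcone : v.1 ^ 2 + v.2 ^ 2 + ρ * v.2 = 0)
    (S : ℝ → ℝ) (hS : ContDiff ℝ 2 S) :
    ∃ ξ : Pt, ξ ≠ 0 ∧ ∃ a b : ℝ,
      ∀ y : Pt,
        Dmat (fun z => b * deriv S (dot3 z ξ)) (fun z => a * S (dot3 z ξ)) y
          = deriv (deriv S) (dot3 y ξ) • Umat ρ v q :=
  wave_cone_direction_has_potential_general ρ v q hρ hcone S hS
end
end

section
/- Every point (ρ,w,z) ∈ K ∩ Λ (i.e. z = ρw and ρ(|w|² + ρw₂) = 0) satisfies z₂ ≤ 0. Consequently the convex hull of K ∩ Λ is contained in the closed half-space {(ρ,w,z) : z₂ ≤ 0}, and the origin (0,0,0) does not belong to the interior of the convex hull of K ∩ Λ. -/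
open Set

noncomputable section

/-- The state space `ℝ × ℝ² × ℝ²` of triples `(ρ, v, q)` (also written `(ρ, w, z)`). -/
abbrev St : Type := ℝ × (ℝ × ℝ) × (ℝ × ℝ)

/-- The wave cone `Λ = {(ρ, v, q) : ρ (v₁² + v₂² + ρ v₂) = 0}`. -/
def Lam : Set St := {A : St | A.1 * (A.2.1.1 ^ 2 + A.2.1.2 ^ 2 + A.1 * A.2.1.2) = 0}

/-- The constraint set `K = {(ρ, v, ρ v) : ρ ∈ ℝ, v ∈ ℝ²}`. -/
def Kset : Set St := {A : St | A.2.2 = A.1 • A.2.1}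

/-- The Euclidean norm on the state space `ℝ × ℝ² × ℝ² ≅ ℝ⁵`. -/
def enorm5 (A : St) : ℝ :=
  Real.sqrt (A.1 ^ 2 + A.2.1.1 ^ 2 + A.2.1.2 ^ 2 + A.2.2.1 ^ 2 + A.2.2.2 ^ 2)

/-- Every point of `K ∩ Λ` has `z₂ ≤ 0`; hence the convex hull of `K ∩ Λ` lies in the
half-space `{z₂ ≤ 0}` and the origin is not an interior point of that convex hull. -/
theorem K_inter_Lambda_in_halfspace :
    (∀ A ∈ Kset ∩ Lam, A.2.2.2 ≤ 0) ∧
    convexHull ℝ (Kset ∩ Lam) ⊆ {A : St | A.2.2.2 ≤ 0} ∧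
    (0 : St) ∉ interior (convexHull ℝ (Kset ∩ Lam)) := by
  have hK : ∀ A ∈ Kset ∩ Lam, A.2.2.2 ≤ 0 := by
    rintro ⟨ρ, ⟨v1, v2⟩, ⟨z1, z2⟩⟩ ⟨hk, hl⟩
    simp only [Kset, Lam, Set.mem_setOf_eq, Prod.smul_def, smul_eq_mul, Prod.mk.injEq] at hk hl
    obtain ⟨h1, h2⟩ := hk
    rcases mul_eq_zero.mp hl with h | h
    · simp [h2, h]
    · subst h2
      show ρ * v2 ≤ 0
      nlinarith [sq_nonneg v1, sq_nonneg v2]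
  have hconv : Convex ℝ {A : St | A.2.2.2 ≤ 0} := by
    intro x hx y hy a b ha hb hab
    simp only [Set.mem_setOf_eq] at *
    have : (a • x + b • y).2.2.2 = a * x.2.2.2 + b * y.2.2.2 := rfl
    rw [this]
    nlinarith
  have hhull : convexHull ℝ (Kset ∩ Lam) ⊆ {A : St | A.2.2.2 ≤ 0} :=
    convexHull_min hK hconv
  refine ⟨hK, hhull, ?_⟩
  intro h0
  have hmem : {A : St | A.2.2.2 ≤ 0} ∈ nhds (0 : St) :=
    Filter.mem_of_superset (mem_interior_iff_mem_nhds.mp h0) hhull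
  obtain ⟨ε, hε, hb⟩ := Metric.mem_nhds_iff.mp hmem
  have hx : ((0, (0, (0, ε / 2))) : St) ∈ Metric.ball (0 : St) ε := by
    simp only [Metric.mem_ball, Prod.dist_eq, dist_zero_right, Prod.norm_def]
    simp [Real.norm_eq_abs, abs_of_pos, abs_of_pos (half_pos hε), hε, half_lt_self]
  have := hb hx
  simp only [Set.mem_setOf_eq] at this
  linarith
end
end

section
/- The function f : ℝ×ℝ²×ℝ² → ℝ defined by f(ρ,v,q) = q₂ − ρv₂ is Λ-convex: for every A ∈ ℝ×ℝ²×ℝ² and every B = (ρ',v',q') with ρ'(v'₁² + v'₂² + ρ'v'₂) = 0, the function t ↦ f(A + tB) is convex on ℝ. -/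
open Set

noncomputable section

/-- The function `f(ρ, v, q) = q₂ - ρ v₂`. -/
def fLam (A : St) : ℝ := A.2.2.2 - A.1 * A.2.1.2

/-- The function `f(ρ, v, q) = q₂ - ρ v₂` is `Λ`-convex: along every wave-cone direction
`B ∈ Λ`, the map `t ↦ f(A + t B)` is convex on `ℝ`. -/
theorem fLam_lambda_convex :
    ∀ A : St, ∀ B ∈ Lam, ConvexOn ℝ Set.univ (fun t : ℝ => fLam (A + t • B)) := by
  intro A B hB
  have hkey : 0 ≤ -(B.1 * B.2.1.2) := by
    have h : B.1 * (B.2.1.1 ^ 2 + B.2.1.2 ^ 2 + B.1 * B.2.1.2) = 0 := hB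
    rcases mul_eq_zero.mp h with h0 | h1
    · simp [h0]
    · nlinarith [sq_nonneg B.2.1.1, sq_nonneg B.2.1.2]
  refine ⟨convex_univ, fun x _ y _ s t hs ht hst => ?_⟩
  simp only [fLam, Prod.fst_add, Prod.snd_add, Prod.smul_fst, Prod.smul_snd, smul_eq_mul,
    smul_add, smul_eq_mul]
  obtain rfl : s = 1 - t := by linarith
  nlinarith [mul_nonneg (mul_nonneg (mul_nonneg hs ht) hkey) (sq_nonneg (x - y))]
end
end

section
/- Every point A = (ρ,v,q) of the Λ-convex hull K^Λ of K satisfies q₂ − ρv₂ ≤ 0. That is, K^Λ ⊆ {(ρ,v,q) ∈ ℝ×ℝ²×ℝ² : q₂ ≤ ρv₂}. -/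
open Set

noncomputable section

/-- A function `f : ℝ⁵ → ℝ` is `Λ`-convex if along every wave-cone direction `B ∈ Λ` and
every base point `A`, the map `t ↦ f(A + t B)` is convex on `ℝ`. -/
def LamConvex (f : St → ℝ) : Prop :=
  ∀ A : St, ∀ B ∈ Lam, ConvexOn ℝ Set.univ (fun t : ℝ => f (A + t • B))

/-- The `Λ`-convex hull of a set `S`: all points that cannot be separated from `S` by a
`Λ`-convex function. -/
def LamHull (S : Set St) : Set St :=
  {A : St | ∀ f : St → ℝ, LamConvex f → ∀ c : ℝ, (∀ C ∈ S, f C ≤ c) → f A ≤ c}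

lemma quad_convexOn (a b c : ℝ) (ha : 0 ≤ a) :
    ConvexOn ℝ Set.univ (fun t : ℝ => a * t ^ 2 + b * t + c) := by
  refine ⟨convex_univ, ?_⟩
  intro x _ y _ p q hp hq hpq
  simp only [smul_eq_mul]
  have key : 0 ≤ a * (p * q * (x - y) ^ 2) :=
    mul_nonneg ha (mul_nonneg (mul_nonneg hp hq) (sq_nonneg (x - y)))
  have hq1 : q = 1 - p := by linarith
  subst hq1
  nlinarith [key]

/-- Every point `(ρ, v, q)` of the `Λ`-convex hull of `K` satisfies `q₂ ≤ ρ v₂`. -/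
theorem lamHull_subset_halfspace :
    LamHull Kset ⊆ {A : St | A.2.2.2 ≤ A.1 * A.2.1.2} := by
  intro A hA
  have key := hA (fun C => C.2.2.2 - C.1 * C.2.1.2) ?_ 0 ?_
  · simpa using key
  · intro P B hB
    have hB' : B.1 * (B.2.1.1 ^ 2 + B.2.1.2 ^ 2 + B.1 * B.2.1.2) = 0 := hB
    have ha : 0 ≤ -(B.1 * B.2.1.2) := by
      rcases eq_or_ne B.1 0 with h | h
      · simp [h]
      · have h2 : B.2.1.1 ^ 2 + B.2.1.2 ^ 2 + B.1 * B.2.1.2 = 0 := by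
          rcases mul_eq_zero.1 hB' with h' | h'
          · exact absurd h' h
          · exact h'
        nlinarith [sq_nonneg B.2.1.1, sq_nonneg B.2.1.2]
    have heq : (fun t : ℝ => (P + t • B).2.2.2 - (P + t • B).1 * (P + t • B).2.1.2)
        = fun t : ℝ => (-(B.1 * B.2.1.2)) * t ^ 2
            + (B.2.2.2 - P.1 * B.2.1.2 - B.1 * P.2.1.2) * t
            + (P.2.2.2 - P.1 * P.2.1.2) := by
      funext t
      simp [Prod.smul_def, smul_eq_mul]
      ring
    rw [heq]
    exact quad_convexOn _ _ _ ha
  · intro C hC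
    have h : C.2.2 = C.1 • C.2.1 := hC
    have : C.2.2.2 = C.1 * C.2.1.2 := by rw [h]; rfl
    simp [this]
end
end

section
/- The set K is contained in the topological boundary of its Λ-convex hull: K ⊆ ∂(K^Λ). In particular no point of K is an interior point of K^Λ. -/
open Set

noncomputable section

/-!
The function `q₂ - ρ v₂` is `Λ`-convex: along a direction `B` it is a quadratic polynomial with
leading coefficient `-ρ_B v₂_B`, which is nonnegative on `Λ` because there either `ρ_B = 0` or
`ρ_B v₂_B = -|v_B|²`. It vanishes on `K`, so `K^Λ` lies in `{q₂ ≤ ρ v₂}`, while every point of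
`K` is a limit of the points `A + t e_{q₂}`, `t > 0`, outside that half-space.
-/

theorem convexOn_quadratic {a : ℝ} (ha : 0 ≤ a) (b c : ℝ) :
    ConvexOn ℝ univ fun t : ℝ => a * t ^ 2 + b * t + c :=
  ((even_two.convexOn_pow.smul ha).add ((LinearMap.mul ℝ ℝ b).convexOn convex_univ)).add_const c

theorem subset_lamHull (S : Set St) : S ⊆ LamHull S :=
  fun A hA _ _ _ hc => hc A hA

theorem lamHull_subset_sublevel {S : Set St} {f : St → ℝ} {c : ℝ} (hf : LamConvex f)
    (hS : ∀ C ∈ S, f C ≤ c) : LamHull S ⊆ {A | f A ≤ c} :=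
  fun _ hA => hA f hf c hS

theorem fst_mul_snd_fst_snd_nonpos_of_mem_lam {B : St} (hB : B ∈ Lam) :
    B.1 * B.2.1.2 ≤ 0 := by
  rcases mul_eq_zero.1 hB with h | h
  · simp [h]
  · nlinarith [sq_nonneg B.2.1.1, sq_nonneg B.2.1.2]

def defect (A : St) : ℝ := A.2.2.2 - A.1 * A.2.1.2

theorem defect_add_smul (A B : St) (t : ℝ) :
    defect (A + t • B) =
      -(B.1 * B.2.1.2) * t ^ 2 + (B.2.2.2 - A.1 * B.2.1.2 - B.1 * A.2.1.2) * t + defect A := by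
  simp only [defect, Prod.fst_add, Prod.snd_add, Prod.smul_fst, Prod.smul_snd, smul_eq_mul]
  ring

theorem defect_lamConvex : LamConvex defect := by
  intro A B hB
  simp only [defect_add_smul]
  exact convexOn_quadratic (neg_nonneg.2 (fst_mul_snd_fst_snd_nonpos_of_mem_lam hB)) _ _

theorem defect_eq_zero_of_mem_kset {A : St} (hA : A ∈ Kset) : defect A = 0 := by
  simp [defect, show A.2.2 = A.1 • A.2.1 from hA]

theorem lamHull_kset_subset : LamHull Kset ⊆ {A | defect A ≤ 0} :=
  lamHull_subset_sublevel defect_lamConvex fun _ hC => (defect_eq_zero_of_mem_kset hC).le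

/-- `K` lies in the topological boundary of its `Λ`-convex hull; in particular no point
of `K` is an interior point of `K^Λ`. -/
theorem K_subset_frontier_lamHull :
    Kset ⊆ frontier (LamHull Kset) := by
  intro A hA
  rw [frontier_eq_closure_inter_closure]
  refine ⟨subset_closure (subset_lamHull Kset hA), ?_⟩
  set e : St := (0, 0, (0, 1))
  have hlim : Filter.Tendsto (fun t : ℝ => A + t • e) (nhdsWithin 0 (Ioi 0)) (nhds A) := by
    have : Continuous fun t : ℝ => A + t • e := by fun_prop
    simpa using (this.tendsto 0).mono_left nhdsWithin_le_nhds
  refine mem_closure_of_tendsto hlim (eventually_nhdsWithin_of_forall fun t (ht : 0 < t) h => ?_)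
  have hle : defect (A + t • e) ≤ 0 := lamHull_kset_subset h
  rw [defect_add_smul, defect_eq_zero_of_mem_kset hA] at hle
  simp [e] at hle
  linarith
end
end

section
/- Let z ∈ ℝ² with |z| < 1 and z ≠ (0,−1/2), and let δ ∈ (0,1) be such that for every A = (ρ,w,ζ) in the open Euclidean ball 𝔹 of radius δ centered at (0,0,z) in ℝ⁵ one has x(A) ≠ a_x(A) and y(A) ≠ a_y(A), where x(A) = (ζ+w)/(1+ρ), a_x(A) = w + (0,−(1−ρ)/2), y(A) = (w−ζ)/(1−ρ), a_y(A) = w + (0,(1+ρ)/2). Define x₁(A) = a_x(A) − (1−ρ)(x(A)−a_x(A))/|x(A)−a_x(A)|, x₂(A) = a_x(A) + (1−ρ)(x(A)−a_x(A))/|x(A)−a_x(A)|, y₁(A) = a_y(A) − (1+ρ)(y(A)−a_y(A))/|y(A)−a_y(A)|, y₂(A) = a_y(A) + (1+ρ)(y(A)−a_y(A))/|y(A)−a_y(A)|, and the four sets T₁(𝔹) = {(1,x₁(A),x₁(A)) : A ∈ 𝔹}, T₂(𝔹) = {(1,x₂(A),x₂(A)) : A ∈ 𝔹}, T₃(𝔹)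 = {(−1,y₁(A),−y₁(A)) : A ∈ 𝔹}, T₄(𝔹) = {(−1,y₂(A),−y₂(A)) : A ∈ 𝔹}. Let 𝒰_z = ⋃_{i=1}^{4} (𝔹 ∪ Tᵢ(𝔹))^{1,Λ}, where for a set S ⊂ ℝ⁵ its first Λ-convex hull is S^{1,Λ} = {tB + (1−t)C : B,C ∈ S, B−C ∈ Λ, t ∈ [0,1]}. Then the set 𝒰_z \ K is open in ℝ⁵. -/
open Set

noncomputable section

/-- The Euclidean norm on `ℝ²`. -/
def norm2 (u : ℝ × ℝ) : ℝ := Real.sqrt (u.1 ^ 2 + u.2 ^ 2)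

/-- For `A = (ρ, w, ζ)`, the point `x(A) = (ζ + w)/(1 + ρ)`. -/
def xA (A : St) : ℝ × ℝ := (1 / (1 + A.1)) • (A.2.2 + A.2.1)

/-- For `A = (ρ, w, ζ)`, the center `a_x(A) = w + (0, -(1-ρ)/2)`. -/
def axA (A : St) : ℝ × ℝ := A.2.1 + (0, -(1 - A.1) / 2)

/-- For `A = (ρ, w, ζ)`, the point `y(A) = (w - ζ)/(1 - ρ)`. -/
def yA (A : St) : ℝ × ℝ := (1 / (1 - A.1)) • (A.2.1 - A.2.2)

/-- For `A = (ρ, w, ζ)`, the center `a_y(A) = w + (0, (1+ρ)/2)`. -/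
def ayA (A : St) : ℝ × ℝ := A.2.1 + (0, (1 + A.1) / 2)

/-- `x₁(A) = a_x(A) - (1-ρ)(x(A) - a_x(A))/|x(A) - a_x(A)|`. -/
def x1A (A : St) : ℝ × ℝ := axA A - ((1 - A.1) / norm2 (xA A - axA A)) • (xA A - axA A)

/-- `x₂(A) = a_x(A) + (1-ρ)(x(A) - a_x(A))/|x(A) - a_x(A)|`. -/
def x2A (A : St) : ℝ × ℝ := axA A + ((1 - A.1) / norm2 (xA A - axA A)) • (xA A - axA A)

/-- `y₁(A) = a_y(A) - (1+ρ)(y(A) - a_y(A))/|y(A) - a_y(A)|`. -/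
def y1A (A : St) : ℝ × ℝ := ayA A - ((1 + A.1) / norm2 (yA A - ayA A)) • (yA A - ayA A)

/-- `y₂(A) = a_y(A) + (1+ρ)(y(A) - a_y(A))/|y(A) - a_y(A)|`. -/
def y2A (A : St) : ℝ × ℝ := ayA A + ((1 + A.1) / norm2 (yA A - ayA A)) • (yA A - ayA A)

/-- The open Euclidean ball `𝔹` of radius `δ` centered at `(0, 0, z)` in `ℝ⁵`. -/
def Bz (z : ℝ × ℝ) (δ : ℝ) : Set St := {A : St | enorm5 (A - (0, (0, 0), z)) < δ}

/-- `T₁(𝔹) = {(1, x₁(A), x₁(A)) : A ∈ 𝔹}`. -/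
def T1set (z : ℝ × ℝ) (δ : ℝ) : Set St := (fun A : St => ((1 : ℝ), x1A A, x1A A)) '' Bz z δ

/-- `T₂(𝔹) = {(1, x₂(A), x₂(A)) : A ∈ 𝔹}`. -/
def T2set (z : ℝ × ℝ) (δ : ℝ) : Set St := (fun A : St => ((1 : ℝ), x2A A, x2A A)) '' Bz z δ

/-- `T₃(𝔹) = {(-1, y₁(A), -y₁(A)) : A ∈ 𝔹}`. -/
def T3set (z : ℝ × ℝ) (δ : ℝ) : Set St := (fun A : St => ((-1 : ℝ), y1A A, -y1A A)) '' Bz z δ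

/-- `T₄(𝔹) = {(-1, y₂(A), -y₂(A)) : A ∈ 𝔹}`. -/
def T4set (z : ℝ × ℝ) (δ : ℝ) : Set St := (fun A : St => ((-1 : ℝ), y2A A, -y2A A)) '' Bz z δ

/-- The first `Λ`-convex hull of a set `S`:
`S^{1,Λ} = {t B + (1-t) C : B, C ∈ S, B - C ∈ Λ, t ∈ [0,1]}`. -/
def firstLamHull (S : Set St) : Set St :=
  {P : St | ∃ B ∈ S, ∃ C ∈ S, B - C ∈ Lam ∧ ∃ t ∈ Icc (0 : ℝ) 1, P = t • B + (1 - t) • C}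

/-- `𝒰_z = ⋃ᵢ (𝔹 ∪ Tᵢ(𝔹))^{1,Λ}`. -/
def Uz (z : ℝ × ℝ) (δ : ℝ) : Set St :=
  firstLamHull (Bz z δ ∪ T1set z δ) ∪ firstLamHull (Bz z δ ∪ T2set z δ) ∪
    firstLamHull (Bz z δ ∪ T3set z δ) ∪ firstLamHull (Bz z δ ∪ T4set z δ)

/-!
Points of a `Λ`-segment joining two points of the open ball `𝔹` are interior to the hull:
translate both ends. A segment with both ends in some `Tᵢ(𝔹)` lies in `K`. The real case is a
segment from `C ∈ 𝔹` to `B = (ε, b, ε b) ∈ Tᵢ(𝔹)`, `ε = ±1`, `t < 1`. The maps `x₁, …, y₂` commute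
with the translations `(ρ, w, ζ) ↦ (ρ, w + d, ζ + ρ d)`, so `Tᵢ(𝔹)` is an open piece of the plane
`{(ε, b, ε b)}`. For `Q` near `P = t B + (1 - t) C`, the `b'` with `(ε, b', ε b') - Q ∈ Λ` form a
circle; projecting `b` radially onto it gives `B(Q) ∈ Tᵢ(𝔹)` continuous in `Q` with `B(P) = B`,
and `C(Q) = (Q - t B(Q)) / (1 - t)` stays in `𝔹`.
-/

open Filter Topology

def levelK (ε : ℝ) (b : ℝ × ℝ) : St := (ε, b, ε • b)

lemma levelK_mem_Kset (ε : ℝ) (b : ℝ × ℝ) : levelK ε b ∈ Kset := rfl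

lemma smul_levelK_add_smul_levelK (ε s t : ℝ) (b c : ℝ × ℝ) (h : s + t = 1) :
    s • levelK ε b + t • levelK ε c = levelK ε (s • b + t • c) := by
  simp only [levelK, Prod.smul_mk, Prod.mk_add_mk, smul_eq_mul, smul_add, smul_smul]
  refine Prod.ext ?_ (Prod.ext rfl ?_)
  · simp only; rw [← add_mul, h, one_mul]
  · simp only [mul_comm s ε, mul_comm t ε]

lemma isClosed_Kset : IsClosed Kset := isClosed_eq (by fun_prop) (by fun_prop)

lemma smul_mem_Lam (r : ℝ) {X : St} (h : X ∈ Lam) : r • X ∈ Lam := by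
  simp only [Lam, mem_ofPred_eq, Prod.smul_fst, Prod.smul_snd, smul_eq_mul] at *
  linear_combination r ^ 3 * h

lemma neg_mem_Lam {X : St} (h : X ∈ Lam) : -X ∈ Lam := by
  simpa using smul_mem_Lam (-1) h

lemma norm2_eq_iff {u : ℝ × ℝ} {r : ℝ} (hr : 0 ≤ r) : norm2 u = r ↔ u.1 ^ 2 + u.2 ^ 2 = r ^ 2 := by
  rw [norm2, Real.sqrt_eq_iff_mul_self_eq (by positivity) hr, sq r]

lemma norm2_pos {u : ℝ × ℝ} (hu : u ≠ 0) : 0 < norm2 u := by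
  refine Real.sqrt_pos.2 ?_
  by_contra! h
  have h1 : u.1 ^ 2 = 0 := by nlinarith [sq_nonneg u.1, sq_nonneg u.2]
  have h2 : u.2 ^ 2 = 0 := by nlinarith [sq_nonneg u.1, sq_nonneg u.2]
  exact hu (Prod.ext (by simpa using h1) (by simpa using h2))

lemma norm2_smul (a : ℝ) (u : ℝ × ℝ) : norm2 (a • u) = |a| * norm2 u := by
  simp only [norm2, Prod.smul_fst, Prod.smul_snd, smul_eq_mul, mul_pow, ← mul_add,
    Real.sqrt_mul' _ (by positivity : (0:ℝ) ≤ u.1 ^ 2 + u.2 ^ 2), Real.sqrt_sq_eq_abs]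

lemma continuous_norm2 : Continuous norm2 := by unfold norm2; fun_prop

/-- Center of the circle `{b | levelK ε b - Q ∈ Λ}` (for `Q.1 ≠ ε`), whose radius is
`|ε - Q.1| / 2`. -/
def lamCenter (ε : ℝ) (Q : St) : ℝ × ℝ := Q.2.1 - (0, (ε - Q.1) / 2)

lemma continuous_lamCenter {ε : ℝ} : Continuous (lamCenter ε) := by unfold lamCenter; fun_prop

lemma levelK_sub_mem_Lam_iff (ε : ℝ) (b : ℝ × ℝ) (Q : St) :
    levelK ε b - Q ∈ Lam ↔ Q.1 = ε ∨ norm2 (b - lamCenter ε Q) = |ε - Q.1| / 2 := by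
  rw [norm2_eq_iff (by positivity), div_pow, sq_abs]
  simp only [Lam, levelK, lamCenter, mem_ofPred_eq, Prod.fst_sub, Prod.snd_sub, mul_eq_zero,
    sub_eq_zero, eq_comm (a := Q.1)]
  refine or_congr Iff.rfl ⟨fun h => by linear_combination h, fun h => by linear_combination h⟩

def lamProj (ε : ℝ) (b : ℝ × ℝ) (Q : St) : ℝ × ℝ :=
  lamCenter ε Q + (|ε - Q.1| / 2 / norm2 (b - lamCenter ε Q)) • (b - lamCenter ε Q)

lemma levelK_lamProj_sub_mem_Lam {ε : ℝ} {b : ℝ × ℝ} {Q : St} (h : b ≠ lamCenter ε Q) :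
    levelK ε (lamProj ε b Q) - Q ∈ Lam := by
  have hpos := norm2_pos (sub_ne_zero.2 h)
  refine (levelK_sub_mem_Lam_iff _ _ _).2 (Or.inr ?_)
  rw [lamProj, add_sub_cancel_left, norm2_smul, abs_of_nonneg (by positivity),
    div_mul_cancel₀ _ hpos.ne']

lemma lamProj_eq_self {ε : ℝ} {b : ℝ × ℝ} {Q : St} (hQ : Q.1 ≠ ε)
    (h : norm2 (b - lamCenter ε Q) = |ε - Q.1| / 2) : lamProj ε b Q = b := by
  have hr : |ε - Q.1| / 2 ≠ 0 := by positivity [sub_ne_zero.2 hQ.symm]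
  rw [lamProj, h, div_self hr, one_smul, add_sub_cancel]

lemma continuousAt_lamProj {ε : ℝ} {b : ℝ × ℝ} {Q : St} (h : b ≠ lamCenter ε Q) :
    ContinuousAt (lamProj ε b) Q := by
  have hpos := norm2_pos (sub_ne_zero.2 h)
  have hd : Continuous fun Q => b - lamCenter ε Q := continuous_const.sub continuous_lamCenter
  unfold lamProj
  refine continuous_lamCenter.continuousAt.fun_add (ContinuousAt.fun_smul ?_ hd.continuousAt)
  exact ContinuousAt.div (by fun_prop) (continuous_norm2.comp hd).continuousAt hpos.ne'

lemma smul_add_one_sub_smul_inv_smul {E : Type*} [AddCommGroup E] [Module ℝ E] {t : ℝ}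
    (ht : t ≠ 1) (B Q : E) : t • B + (1 - t) • ((1 - t)⁻¹ • (Q - t • B)) = Q := by
  rw [smul_smul, mul_inv_cancel₀ (sub_ne_zero.2 ht.symm), one_smul, add_sub_cancel]

lemma sub_inv_smul_sub_smul {E : Type*} [AddCommGroup E] [Module ℝ E] {t : ℝ}
    (ht : t ≠ 1) (B Q : E) : B - (1 - t)⁻¹ • (Q - t • B) = (1 - t)⁻¹ • (B - Q) := by
  have h : (1 - t)⁻¹ * (1 - t) = 1 := inv_mul_cancel₀ (sub_ne_zero.2 ht.symm)
  calc B - (1 - t)⁻¹ • (Q - t • B) = ((1 - t)⁻¹ * (1 - t)) • B - (1 - t)⁻¹ • (Q - t • B) := by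
        rw [h, one_smul]
    _ = (1 - t)⁻¹ • (B - Q) := by module

lemma firstLamHull_mem_nhds_of_isOpen {S U : Set St} (hU : IsOpen U) (hUS : U ⊆ S) {B C : St}
    (hB : B ∈ U) (hC : C ∈ U) (hL : B - C ∈ Lam) {t : ℝ} (ht : t ∈ Icc (0 : ℝ) 1) :
    firstLamHull S ∈ 𝓝 (t • B + (1 - t) • C) := by
  set P := t • B + (1 - t) • C
  have hB' : ∀ᶠ Q in 𝓝 P, B + (Q - P) ∈ U :=
    (Continuous.continuousAt (by fun_prop)).eventually_mem (by simpa using hU.mem_nhds hB)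
  have hC' : ∀ᶠ Q in 𝓝 P, C + (Q - P) ∈ U :=
    (Continuous.continuousAt (by fun_prop)).eventually_mem (by simpa using hU.mem_nhds hC)
  filter_upwards [hB', hC'] with Q hQB hQC
  exact ⟨_, hUS hQB, _, hUS hQC, by simpa using hL, t, ht, by simp only [P]; module⟩

lemma firstLamHull_mem_nhds_of_levelK {U : Set St} {W : Set (ℝ × ℝ)} {ε t : ℝ} {b : ℝ × ℝ}
    {C : St} (hU : IsOpen U) (hW : IsOpen W) (hb : b ∈ W) (hC : C ∈ U) (hCε : C.1 ≠ ε)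
    (hL : levelK ε b - C ∈ Lam) (ht0 : 0 ≤ t) (ht1 : t < 1) :
    firstLamHull (U ∪ levelK ε '' W) ∈ 𝓝 (t • levelK ε b + (1 - t) • C) := by
  set P := t • levelK ε b + (1 - t) • C
  have hPε : P.1 ≠ ε := by
    have : P.1 - ε = (1 - t) * (C.1 - ε) := by simp [P, levelK]; ring
    exact sub_ne_zero.1 (this ▸ mul_ne_zero (by linarith) (sub_ne_zero.2 hCε))
  have hPL : levelK ε b - P ∈ Lam := by
    have : levelK ε b - P = (1 - t) • (levelK ε b - C) := by simp only [P]; module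
    exact this ▸ smul_mem_Lam _ hL
  have hnorm := ((levelK_sub_mem_Lam_iff ε b P).1 hPL).resolve_left hPε
  have hne : b ≠ lamCenter ε P := by
    intro h
    rw [h, sub_self, norm2, Prod.fst_zero, Prod.snd_zero] at hnorm
    norm_num [eq_comm (a := (0 : ℝ)), sub_eq_zero] at hnorm
    exact hPε hnorm.symm
  have hproj : lamProj ε b P = b := lamProj_eq_self hPε hnorm
  set C' : St → St := fun Q => (1 - t)⁻¹ • (Q - t • levelK ε (lamProj ε b Q))
  have hC' : C' P = C := by
    simp only [C', hproj, P, add_sub_cancel_left, smul_smul,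
      inv_mul_cancel₀ (sub_ne_zero.2 ht1.ne'), one_smul]
  have hcont : ContinuousAt C' P := by
    have := continuousAt_lamProj hne
    have hK : Continuous (levelK ε) := by unfold levelK; fun_prop
    fun_prop
  have hne' : ∀ᶠ Q in 𝓝 P, lamCenter ε Q ≠ b :=
    continuous_lamCenter.continuousAt.eventually_ne hne.symm
  filter_upwards [hne', (continuousAt_lamProj hne).eventually_mem (hproj ▸ hW.mem_nhds hb),
    hcont.eventually_mem (hC' ▸ hU.mem_nhds hC)] with Q hQ hQW hQU
  refine ⟨_, Or.inr ⟨_, hQW, rfl⟩, C' Q, Or.inl hQU, ?_, t, ⟨ht0, ht1.le⟩,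
    (smul_add_one_sub_smul_inv_smul ht1.ne _ _).symm⟩
  rw [sub_inv_smul_sub_smul ht1.ne]
  exact smul_mem_Lam _ (levelK_lamProj_sub_mem_Lam (Ne.symm hQ))

theorem isOpen_firstLamHull_union_levelK_sdiff_Kset {U : Set St} {W : Set (ℝ × ℝ)} {ε : ℝ}
    (hU : IsOpen U) (hW : IsOpen W) (hUε : ∀ C ∈ U, C.1 ≠ ε) :
    IsOpen (firstLamHull (U ∪ levelK ε '' W) \ Kset) := by
  refine isOpen_iff_mem_nhds.2 ?_
  rintro _ ⟨⟨B, hB, C, hC, hL, t, ht, rfl⟩, hPK⟩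
  refine inter_mem ?_ (isClosed_Kset.isOpen_compl.mem_nhds hPK)
  rcases hB with hB | ⟨b, hb, rfl⟩ <;> rcases hC with hC | ⟨c, hc, rfl⟩
  · exact firstLamHull_mem_nhds_of_isOpen hU subset_union_left hB hC hL ht
  · rcases ht.1.eq_or_lt with rfl | ht0
    · exact absurd (by simpa using levelK_mem_Kset ε c) hPK
    · have := firstLamHull_mem_nhds_of_levelK hU hW hc hB (hUε B hB)
        (by simpa using neg_mem_Lam hL) (sub_nonneg.2 ht.2) (by linarith)
      rwa [sub_sub_cancel, add_comm] at this
  · rcases ht.2.eq_or_lt with rfl | ht1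
    · exact absurd (by simpa using levelK_mem_Kset ε b) hPK
    · exact firstLamHull_mem_nhds_of_levelK hU hW hb hC (hUε C hC) hL ht.1 ht1
  · exact absurd (smul_levelK_add_smul_levelK ε t (1 - t) b c (by ring) ▸ levelK_mem_Kset _ _) hPK

def shiftK (d : ℝ × ℝ) (A : St) : St := (A.1, A.2.1 + d, A.2.2 + A.1 • d)

lemma isOpen_image_of_shiftK {U : Set St} {F : St → ℝ × ℝ} (hU : IsOpen U)
    (hF : ∀ A ∈ U, ∀ d, F (shiftK d A) = F A + d) : IsOpen (F '' U) := by
  refine isOpen_iff_mem_nhds.2 ?_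
  rintro _ ⟨A, hA, rfl⟩
  have hcont : Continuous fun b => shiftK (b - F A) A := by unfold shiftK; fun_prop
  have hA' : shiftK (F A - F A) A = A := by simp [shiftK]
  filter_upwards [hcont.continuousAt.preimage_mem_nhds (hA' ▸ hU.mem_nhds hA)] with b hb
  exact ⟨_, hb, by rw [hF A hA, add_sub_cancel]⟩

section Equivariance

variable (d : ℝ × ℝ) {A : St}

lemma xA_shiftK (h : 1 + A.1 ≠ 0) : xA (shiftK d A) = xA A + d := by
  simp only [xA, shiftK, one_div]
  match_scalars <;> field_simp; ring

lemma yA_shiftK (h : 1 - A.1 ≠ 0) : yA (shiftK d A) = yA A + d := by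
  simp only [yA, shiftK, one_div]
  match_scalars <;> field_simp

lemma axA_shiftK : axA (shiftK d A) = axA A + d := by
  simp only [axA, shiftK]; abel

lemma ayA_shiftK : ayA (shiftK d A) = ayA A + d := by
  simp only [ayA, shiftK]; abel

lemma x1A_shiftK (h : 1 + A.1 ≠ 0) : x1A (shiftK d A) = x1A A + d := by
  simp only [x1A, xA_shiftK d h, axA_shiftK, add_sub_add_right_eq_sub]
  simp only [shiftK]; abel

lemma x2A_shiftK (h : 1 + A.1 ≠ 0) : x2A (shiftK d A) = x2A A + d := by
  simp only [x2A, xA_shiftK d h, axA_shiftK, add_sub_add_right_eq_sub]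
  simp only [shiftK]; abel

lemma y1A_shiftK (h : 1 - A.1 ≠ 0) : y1A (shiftK d A) = y1A A + d := by
  simp only [y1A, yA_shiftK d h, ayA_shiftK, add_sub_add_right_eq_sub]
  simp only [shiftK]; abel

lemma y2A_shiftK (h : 1 - A.1 ≠ 0) : y2A (shiftK d A) = y2A A + d := by
  simp only [y2A, yA_shiftK d h, ayA_shiftK, add_sub_add_right_eq_sub]
  simp only [shiftK]; abel

end Equivariance

lemma isOpen_Bz (z : ℝ × ℝ) (δ : ℝ) : IsOpen (Bz z δ) :=
  isOpen_lt (by unfold enorm5; fun_prop) continuous_const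

lemma abs_fst_le_enorm5 (A : St) : |A.1| ≤ enorm5 A := by
  rw [← Real.sqrt_sq_eq_abs, enorm5]
  refine Real.sqrt_le_sqrt ?_
  linarith [sq_nonneg A.2.1.1, sq_nonneg A.2.1.2, sq_nonneg A.2.2.1, sq_nonneg A.2.2.2]

lemma abs_fst_lt_of_mem_Bz {z : ℝ × ℝ} {δ : ℝ} {A : St} (hA : A ∈ Bz z δ) : |A.1| < δ := by
  simpa using (abs_fst_le_enorm5 _).trans_lt hA

theorem Uz_sdiff_K_isOpen_general (z : ℝ × ℝ)
    (δ : ℝ) (hδ1 : δ < 1) :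
    IsOpen (Uz z δ \ Kset) := by
  have hρ : ∀ A ∈ Bz z δ, |A.1| < 1 := fun A hA => (abs_fst_lt_of_mem_Bz hA).trans hδ1
  have hplus : ∀ A ∈ Bz z δ, 1 + A.1 ≠ 0 := fun A hA => by linarith [abs_lt.1 (hρ A hA)]
  have hminus : ∀ A ∈ Bz z δ, 1 - A.1 ≠ 0 := fun A hA => by linarith [abs_lt.1 (hρ A hA)]
  have hpiece : ∀ ε F, |ε| = 1 → (∀ A ∈ Bz z δ, ∀ d, F (shiftK d A) = F A + d) →
      IsOpen (firstLamHull (Bz z δ ∪ levelK ε '' (F '' Bz z δ)) \ Kset) :=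
    fun ε F hε hF => isOpen_firstLamHull_union_levelK_sdiff_Kset (isOpen_Bz z δ)
      (isOpen_image_of_shiftK (isOpen_Bz z δ) hF)
      (fun A hA hAε => (hρ A hA).ne (hAε ▸ hε))
  have h1 := hpiece 1 x1A (by simp) fun A hA d => x1A_shiftK d (hplus A hA)
  have h2 := hpiece 1 x2A (by simp) fun A hA d => x2A_shiftK d (hplus A hA)
  have h3 := hpiece (-1) y1A (by simp) fun A hA d => y1A_shiftK d (hminus A hA)
  have h4 := hpiece (-1) y2A (by simp) fun A hA d => y2A_shiftK d (hminus A hA)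
  simp only [image_image, levelK, one_smul, neg_one_smul] at h1 h2 h3 h4
  rw [Uz, union_sdiff_distrib, union_sdiff_distrib, union_sdiff_distrib]
  exact ((h1.union h2).union h3).union h4

/-- **Openness of the relaxed set.** The set `𝒰_z \ K` is open in `ℝ⁵`. -/
theorem Uz_sdiff_K_isOpen (z : ℝ × ℝ)
    (hz : Real.sqrt (z.1 ^ 2 + z.2 ^ 2) < 1) (hz' : z ≠ (0, -1/2))
    (δ : ℝ) (hδ0 : 0 < δ) (hδ1 : δ < 1)
    (hnd : ∀ A ∈ Bz z δ, xA A ≠ axA A ∧ yA A ≠ ayA A) :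
    IsOpen (Uz z δ \ Kset) :=
  Uz_sdiff_K_isOpen_general z δ hδ1
end
end
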